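/- Let β > 2, a > 0, z ≥ 0 and u ≥ 0. Then ∫_u^∞ e^{−a(φ_β(z)−1)s^{2/β}} · (2a/β) s^{2/β − 1} e^{−a s^{2/β}} ds = (1/φ_β(z)) · e^{−a u^{2/β} φ_β(z)}, where φ_β(z) = e^{−z} + z^{2/β} γ(1 − 2/β, z). (This is the joint transform E[1{L ≥ u} e^{−zf}] of the path-loss factor L and the interference factor f in the infinite Poisson model with a = λπE[S^{2/β}]/K².) -/

import Mathlib

open MeasureTheory Real

/-- The lower incomplete gamma function `γ(α, z) = ∫_0^z t^(α-1) e^{-t} dt`. -/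
noncomputable def lowerIncGamma (α z : ℝ) : ℝ :=
  ∫ t in Set.Ioo (0:ℝ) z, t ^ (α - 1) * Real.exp (-t)

/-- `φ_β(z) = e^{-z} + z^{2/β} γ(1 - 2/β, z)`. -/
noncomputable def phiBeta (β z : ℝ) : ℝ :=
  Real.exp (-z) + z ^ (2 / β) * lowerIncGamma (1 - 2 / β) z

/-!
Multiplying the conditional transform `e^{-a(φ-1)s^{2/β}}` by the density of `L` merges the two
exponentials into `e^{-aφ s^{2/β}}`, so the integrand is `1/φ` times the density of a Weibull law
with shape `2/β` and rate `aφ`. Its tail is explicit: `-e^{-b s^c}` is an antiderivative of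
`b c s^{c-1} e^{-b s^c}`. All that remains is `φ > 0`, which makes the rate positive.
-/

lemma lowerIncGamma_nonneg (α z : ℝ) : 0 ≤ lowerIncGamma α z :=
  setIntegral_nonneg measurableSet_Ioo fun _ ht =>
    mul_nonneg (rpow_nonneg ht.1.le _) (exp_pos _).le

lemma phiBeta_pos (β : ℝ) {z : ℝ} (hz : 0 ≤ z) : 0 < phiBeta β z :=
  add_pos_of_pos_of_nonneg (exp_pos _)
    (mul_nonneg (rpow_nonneg hz _) (lowerIncGamma_nonneg _ _))

lemma hasDerivAt_neg_exp_neg_mul_rpow (b c : ℝ) {s : ℝ} (hs : s ≠ 0) :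
    HasDerivAt (fun x : ℝ => -exp (-b * x ^ c)) (b * c * s ^ (c - 1) * exp (-b * s ^ c)) s := by
  refine (((hasDerivAt_rpow_const (p := c) (Or.inl hs)).const_mul (-b)).exp).neg.congr_deriv ?_
  ring

lemma integral_Ioi_mul_rpow_mul_exp_neg_mul_rpow {b c u : ℝ} (hb : 0 < b) (hc : 0 < c)
    (hu : 0 ≤ u) :
    ∫ s in Set.Ioi u, b * c * s ^ (c - 1) * exp (-b * s ^ c) = exp (-b * u ^ c) := by
  have hcont : ContinuousWithinAt (fun x : ℝ => -exp (-b * x ^ c)) (Set.Ici u) u :=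
    ((continuousAt_rpow_const u c (Or.inr hc.le)).const_mul (-b)).rexp.neg.continuousWithinAt
  have hderiv : ∀ s ∈ Set.Ioi u,
      HasDerivAt (fun x : ℝ => -exp (-b * x ^ c)) (b * c * s ^ (c - 1) * exp (-b * s ^ c)) s :=
    fun s hs => hasDerivAt_neg_exp_neg_mul_rpow b c (hu.trans_lt hs).ne'
  have hnonneg : ∀ s ∈ Set.Ioi u, 0 ≤ b * c * s ^ (c - 1) * exp (-b * s ^ c) := by
    intro s hs
    have : 0 < s := hu.trans_lt hs
    positivity
  have hlim : Filter.Tendsto (fun x : ℝ => -exp (-b * x ^ c)) Filter.atTop (nhds 0) := by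
    have hexp : Filter.Tendsto (fun x : ℝ => -b * x ^ c) Filter.atTop Filter.atBot := by
      simpa only [neg_mul, Function.comp_def] using
        Filter.tendsto_neg_atTop_atBot.comp ((tendsto_rpow_atTop hc).const_mul_atTop hb)
    simpa using (tendsto_exp_atBot.comp hexp).neg
  rw [integral_Ioi_of_hasDerivAt_of_nonneg hcont hderiv hnonneg hlim]
  ring

theorem stmt_11 (β a z u : ℝ) (hβ : 2 < β) (ha : 0 < a) (hz : 0 ≤ z) (hu : 0 ≤ u) :
    ∫ s in Set.Ioi u,
        Real.exp (-a * (phiBeta β z - 1) * s ^ (2 / β)) *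
          ((2 * a / β) * s ^ (2 / β - 1) * Real.exp (-a * s ^ (2 / β)))
      = (1 / phiBeta β z) * Real.exp (-a * u ^ (2 / β) * phiBeta β z) := by
  set φ := phiBeta β z
  have hφ : 0 < φ := phiBeta_pos β hz
  have hc : 0 < 2 / β := div_pos two_pos (two_pos.trans hβ)
  have hintegrand : ∀ s : ℝ,
      exp (-a * (φ - 1) * s ^ (2 / β)) * ((2 * a / β) * s ^ (2 / β - 1) * exp (-a * s ^ (2 / β)))
        = 1 / φ * ((a * φ) * (2 / β) * s ^ (2 / β - 1) * exp (-(a * φ) * s ^ (2 / β))) := by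
    intro s
    have hexp : exp (-a * (φ - 1) * s ^ (2 / β)) * exp (-a * s ^ (2 / β))
        = exp (-(a * φ) * s ^ (2 / β)) := by
      rw [← exp_add]; ring_nf
    rw [← hexp]
    field_simp
  simp_rw [hintegrand]
  rw [integral_const_mul, integral_Ioi_mul_rpow_mul_exp_neg_mul_rpow (mul_pos ha hφ) hc hu]
  ring_nf
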